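/- arXiv:2111.06478 — 7 statements merged into one kernel-verified Lean document; each statement's English description precedes it below -/
import Mathlib

section
/- A linear functional u on polynomials is positive-definite if and only if all its moments u_n = ⟨u, x^n⟩ are real and all Hankel determinants H_n = det[(u_{i+j})_{i,j=0}^n] are strictly positive. -/
open Polynomial

def PosDefFunctional (u : Polynomial ℂ →ₗ[ℂ] ℂ) : Prop :=
  ∀ p : Polynomial ℝ, p ≠ 0 → (∀ x : ℝ, 0 ≤ p.eval x) →
    ∃ r : ℝ, 0 < r ∧ u (p.map (algebraMap ℝ ℂ)) = (r : ℂ)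

noncomputable def hankelDet (u : Polynomial ℂ →ₗ[ℂ] ℂ) (n : ℕ) : ℂ :=
  Matrix.det (Matrix.of fun i j : Fin (n + 1) => u (X ^ ((i : ℕ) + (j : ℕ))))

/-!
Once the moments are real (test positivity on `X ^ n * X ^ n`, `1` and `(X ^ n + 1) ^ 2`),
`u` restricts to a real functional `L` on `ℝ[X]`, and `L (q * q) = vᵀ Hₙ v` for the coefficient
vector `v` of `q`, where `Hₙ` is the Hankel matrix of the moments. A nonnegative real polynomial
is a sum of squares, so positivity of `L` on nonnegative polynomials amounts to positivity on
nonzero squares, i.e. to positive-definiteness of every `Hₙ`; by Sylvester's criterion this is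
positivity of all Hankel determinants.
-/

open Matrix
open scoped ComplexOrder

namespace Polynomial

theorem sq_dvd_sub_C_eval_of_isMinOn {p : ℝ[X]} {a : ℝ} (ha : ∀ x, p.eval a ≤ p.eval x) :
    (X - C a) ^ 2 ∣ p - C (p.eval a) := by
  rcases eq_or_ne (p - C (p.eval a)) 0 with h | h
  · rw [h]; exact dvd_zero _
  have hmin : IsLocalMin (fun x => p.eval x) a :=
    IsMinOn.isLocalMin (fun x _ => ha x) Filter.univ_mem
  have hderiv : p.derivative.eval a = 0 := by
    rw [← Polynomial.deriv]; exact hmin.deriv_eq_zero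
  rw [← le_rootMultiplicity_iff h, Nat.succ_le_iff, one_lt_rootMultiplicity_iff_isRoot h]
  simp [hderiv]

theorem eval_nonneg_of_X_sub_C_sq_mul {r : ℝ[X]} {a : ℝ}
    (h : ∀ x, 0 ≤ ((X - C a) ^ 2 * r).eval x) (x : ℝ) : 0 ≤ r.eval x := by
  have hne : ∀ y ∈ ({a}ᶜ : Set ℝ), 0 ≤ r.eval y := fun y hy => by
    have := h y
    simp only [eval_mul, eval_pow, eval_sub, eval_X, eval_C] at this
    exact nonneg_of_mul_nonneg_right this (sq_pos_of_ne_zero (sub_ne_zero.2 hy))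
  exact (isClosed_le continuous_const r.continuous).closure_subset_iff.2 hne
    ((dense_compl_singleton a).closure_eq ▸ Set.mem_univ x)

/-- Splitting off the minimum value `p a` leaves `(X - a)² r` with `r ≥ 0` of lower degree. -/
theorem isSumSq_of_forall_eval_nonneg {p : ℝ[X]} (hp : ∀ x, 0 ≤ p.eval x) : IsSumSq p := by
  induction hn : p.natDegree using Nat.strong_induction_on generalizing p with
  | _ n ih =>
  obtain ⟨a, ha⟩ := p.exists_forall_norm_le
  simp only [Real.norm_of_nonneg (hp _)] at ha
  obtain ⟨r, hr⟩ := sq_dvd_sub_C_eval_of_isMinOn ha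
  have hp_eq : p = C √(p.eval a) * C √(p.eval a) + (X - C a) ^ 2 * r := by
    rw [← C_mul, Real.mul_self_sqrt (hp a), ← hr, add_sub_cancel]
  rw [hp_eq]
  refine .add (.mul_self _) ?_
  rcases eq_or_ne r 0 with rfl | hr0
  · rw [mul_zero]; exact .zero
  have hr_nonneg : ∀ x, 0 ≤ r.eval x := eval_nonneg_of_X_sub_C_sq_mul fun x => by
    rw [← hr, eval_sub, eval_C, sub_nonneg]; exact ha x
  have hdeg : r.natDegree < n := by
    have := congrArg natDegree hr
    rw [natDegree_sub_C, natDegree_mul (pow_ne_zero _ (X_sub_C_ne_zero a)) hr0,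
      natDegree_pow, natDegree_X_sub_C] at this
    omega
  rw [sq]
  exact .mul (.mul_self _) (ih _ hdeg hr_nonneg rfl)

end Polynomial

theorem IsSumSq.map_pos_of_map_mul_self_pos {R S : Type*} [NonUnitalNonAssocSemiring R]
    [AddCommMonoid S] [PartialOrder S] [IsOrderedCancelAddMonoid S] (L : R →+ S)
    (hL : ∀ a ≠ 0, 0 < L (a * a)) {s : R} (hs : IsSumSq s) (hs0 : s ≠ 0) : 0 < L s := by
  suffices 0 ≤ L s ∧ (s ≠ 0 → 0 < L s) from this.2 hs0
  clear hs0
  induction hs with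
  | zero => simp
  | sq_add a _ ih =>
    rw [map_add]
    rcases eq_or_ne a 0 with rfl | ha
    · simpa using ih
    exact ⟨add_nonneg (hL a ha).le ih.1, fun _ => add_pos_of_pos_of_nonneg (hL a ha) ih.1⟩

namespace Matrix

theorem IsHermitian.eq_fromBlocks_toBlocks {m n α : Type*} [Star α]
    {N : Matrix (m ⊕ n) (m ⊕ n) α} (hN : N.IsHermitian) :
    N = Matrix.fromBlocks N.toBlocks₁₁ N.toBlocks₁₂ N.toBlocks₁₂ᴴ N.toBlocks₂₂ := by
  conv_lhs => rw [← fromBlocks_toBlocks N]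
  congr
  ext i j
  exact (congr_fun₂ hN (Sum.inr i) (Sum.inl j)).symm

variable {𝕜 : Type*} [RCLike 𝕜]

theorem posDef_of_det_pos_of_fin_one {S : Matrix (Fin 1) (Fin 1) 𝕜} (h : 0 < S.det) :
    S.PosDef := by
  have : S = diagonal fun _ => S.det := by
    ext i j; fin_cases i; fin_cases j; simp
  rw [this]
  exact posDef_diagonal_iff.2 fun _ => h

/-- **Sylvester's criterion**. By induction, the leading `n × n` block `A` is positive definite;
its Schur complement in `M` is `1 × 1` with determinant `det M / det A > 0`. -/
theorem posDef_of_forall_det_submatrix_castLE_pos {n : ℕ} {M : Matrix (Fin n) (Fin n) 𝕜}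
    (hM : M.IsHermitian)
    (h : ∀ k (hk : k < n), 0 < (M.submatrix (Fin.castLE hk) (Fin.castLE hk)).det) :
    M.PosDef := by
  induction n with
  | zero => exact .of_dotProduct_mulVec_pos hM fun x hx => (hx (Subsingleton.elim x 0)).elim
  | succ n ih =>
  set A := M.submatrix Fin.castSucc Fin.castSucc
  have hA : A.PosDef := ih (hM.submatrix _) fun k hk => h k (hk.trans n.lt_succ_self)
  have hdetM : 0 < M.det := by simpa using h n n.lt_succ_self
  have : Invertible A := hA.isUnit.invertible
  set N := M.submatrix finSumFinEquiv finSumFinEquiv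
  have hN : N = fromBlocks A N.toBlocks₁₂ N.toBlocks₁₂ᴴ N.toBlocks₂₂ :=
    (hM.submatrix _).eq_fromBlocks_toBlocks
  set S := N.toBlocks₂₂ - N.toBlocks₁₂ᴴ * A⁻¹ * N.toBlocks₁₂
  have hS : S.PosDef := by
    have hdetN : N.det = A.det * S.det := by
      rw [hN, det_fromBlocks₁₁, invOf_eq_nonsing_inv]
    rw [det_submatrix_equiv_self] at hdetN
    exact posDef_of_det_pos_of_fin_one (pos_of_mul_pos_right (hdetN ▸ hdetM) hA.det_pos.le)
  have hNpsd : N.PosSemidef := by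
    rw [hN]; exact (PosDef.fromBlocks₁₁ _ _ hA).2 hS.posSemidef
  exact ((posSemidef_submatrix_equiv _).1 hNpsd).posDef_iff_det_ne_zero.2 hdetM.ne'

end Matrix

def hankelMatrix {R : Type*} (m : ℕ → R) (n : ℕ) : Matrix (Fin n) (Fin n) R :=
  Matrix.of fun i j => m (i + j)

theorem isHermitian_hankelMatrix {R : Type*} [Star R] [TrivialStar R] (m : ℕ → R) (n : ℕ) :
    (hankelMatrix m n).IsHermitian := by
  ext i j
  simp [hankelMatrix, add_comm]

theorem LinearMap.map_degreeLTEquiv_symm_mul {R : Type*} [CommRing R] (L : R[X] →ₗ[R] R)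
    {n : ℕ} (v w : Fin n → R) :
    L ((degreeLTEquiv R n).symm v * (degreeLTEquiv R n).symm w) =
      v ⬝ᵥ hankelMatrix (fun k => L (X ^ k)) n *ᵥ w := by
  have hsymm (u : Fin n → R) :
      ((degreeLTEquiv R n).symm u : R[X]) = ∑ i : Fin n, monomial i (u i) := rfl
  rw [hsymm, hsymm, Finset.sum_mul_sum]
  simp only [monomial_mul_monomial, map_sum, dotProduct, mulVec, hankelMatrix, of_apply,
    Finset.mul_sum]
  refine Finset.sum_congr rfl fun i _ => Finset.sum_congr rfl fun j _ => ?_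
  rw [← C_mul_X_pow_eq_monomial, ← smul_eq_C_mul, map_smul, smul_eq_mul]
  ring

theorem posDef_hankelMatrix_iff_det_pos (m : ℕ → ℝ) :
    (∀ n, (hankelMatrix m n).PosDef) ↔ ∀ n, 0 < (hankelMatrix m (n + 1)).det :=
  ⟨fun h n => (h (n + 1)).det_pos, fun h n =>
    posDef_of_forall_det_submatrix_castLE_pos (isHermitian_hankelMatrix m n) fun k _ => h k⟩

namespace LinearMap

theorem posDef_hankelMatrix_iff (L : ℝ[X] →ₗ[ℝ] ℝ) :
    (∀ n, (hankelMatrix (fun k => L (X ^ k)) n).PosDef) ↔ ∀ p ≠ 0, 0 < L (p * p) := by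
  constructor
  · intro h p hp
    have hmem : p ∈ degreeLT ℝ (p.natDegree + 1) :=
      degreeLT_succ_eq_degreeLE (R := ℝ) ▸ mem_degreeLE.2 degree_le_natDegree
    set v := degreeLTEquiv ℝ _ ⟨p, hmem⟩
    have hv : v ≠ 0 := by simpa [v] using hp
    have := (h _).dotProduct_mulVec_pos hv
    rwa [star_trivial, ← L.map_degreeLTEquiv_symm_mul, LinearEquiv.symm_apply_apply] at this
  · refine fun h n => .of_dotProduct_mulVec_pos (isHermitian_hankelMatrix _ n) fun v hv => ?_
    rw [star_trivial, ← L.map_degreeLTEquiv_symm_mul]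
    exact h _ (by simpa using hv)

theorem pos_of_nonneg_iff_pos_mul_self (L : ℝ[X] →ₗ[ℝ] ℝ) :
    (∀ p ≠ 0, (∀ x, 0 ≤ p.eval x) → 0 < L p) ↔ ∀ p ≠ 0, 0 < L (p * p) :=
  ⟨fun h p hp => h (p * p) (mul_self_ne_zero.2 hp) fun x => by
      rw [eval_mul]; exact mul_self_nonneg _,
    fun h _ hp hnn =>
      (isSumSq_of_forall_eval_nonneg hnn).map_pos_of_map_mul_self_pos L.toAddMonoidHom h hp⟩

theorem pos_of_nonneg_iff_det_hankelMatrix_pos (L : ℝ[X] →ₗ[ℝ] ℝ) :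
    (∀ p ≠ 0, (∀ x, 0 ≤ p.eval x) → 0 < L p) ↔
      ∀ n, 0 < (hankelMatrix (fun k => L (X ^ k)) (n + 1)).det :=
  L.pos_of_nonneg_iff_pos_mul_self.trans <|
    L.posDef_hankelMatrix_iff.symm.trans (posDef_hankelMatrix_iff_det_pos _)

end LinearMap

noncomputable def realRestriction (u : ℂ[X] →ₗ[ℂ] ℂ) : ℝ[X] →ₗ[ℝ] ℝ :=
  Complex.reLm ∘ₗ u.restrictScalars ℝ ∘ₗ (mapAlg ℝ ℂ).toLinearMap

section realRestriction

variable {u : ℂ[X] →ₗ[ℂ] ℂ}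

theorem realRestriction_apply (p : ℝ[X]) :
    realRestriction u p = (u (p.map (algebraMap ℝ ℂ))).re := by
  simp [realRestriction, mapAlg_eq_map]

theorem map_eq_ofReal_realRestriction (h : ∀ n, (u (X ^ n)).im = 0) (p : ℝ[X]) :
    u (p.map (algebraMap ℝ ℂ)) = realRestriction u p := by
  refine Complex.ext (by simp [realRestriction_apply]) ?_
  rw [Complex.ofReal_im]
  induction p using Polynomial.induction_on' with
  | add p q hp hq => rw [Polynomial.map_add, map_add, Complex.add_im, hp, hq, add_zero]
  | monomial n a =>
    rw [map_monomial, ← C_mul_X_pow_eq_monomial, ← smul_eq_C_mul, map_smul, smul_eq_mul]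
    simp [h n]

theorem PosDefFunctional.im_map_mul_self_eq_zero (hu : PosDefFunctional u) (q : ℝ[X]) :
    (u ((q * q).map (algebraMap ℝ ℂ))).im = 0 := by
  rcases eq_or_ne q 0 with rfl | hq
  · simp
  obtain ⟨r, -, hr⟩ := hu _ (mul_self_ne_zero.2 hq) fun x => by
    rw [eval_mul]; exact mul_self_nonneg _
  rw [hr, Complex.ofReal_im]

theorem PosDefFunctional.im_moment_eq_zero (hu : PosDefFunctional u) (n : ℕ) :
    (u (X ^ n)).im = 0 := by
  have h := hu.im_map_mul_self_eq_zero (X ^ n + 1)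
  have hsq := hu.im_map_mul_self_eq_zero (X ^ n)
  have hone := hu.im_map_mul_self_eq_zero 1
  simp only [Polynomial.map_mul, Polynomial.map_add, Polynomial.map_pow, map_X,
    Polynomial.map_one, add_mul, mul_add, one_mul, mul_one, map_add, Complex.add_im] at h hsq hone
  linarith

theorem posDefFunctional_iff (h : ∀ n, (u (X ^ n)).im = 0) :
    PosDefFunctional u ↔ ∀ p ≠ 0, (∀ x, 0 ≤ p.eval x) → 0 < realRestriction u p := by
  simp only [PosDefFunctional, map_eq_ofReal_realRestriction h, Complex.ofReal_inj,
    exists_eq_right']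

theorem hankelDet_eq_ofReal_det (h : ∀ n, (u (X ^ n)).im = 0) (n : ℕ) :
    hankelDet u n = ((hankelMatrix (fun k => realRestriction u (X ^ k)) (n + 1)).det : ℂ) := by
  rw [hankelDet, ← Complex.ofRealHom_eq_coe, RingHom.map_det]
  congr 1
  ext i j
  simp [hankelMatrix, ← map_eq_ofReal_realRestriction h]

end realRestriction

/-- `u` is positive-definite iff all moments are real and all Hankel determinants
are strictly positive. -/
theorem posDef_iff_moments_real_and_hankel_pos (u : Polynomial ℂ →ₗ[ℂ] ℂ) :
    PosDefFunctional u ↔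
      ((∀ n : ℕ, ∃ r : ℝ, u (X ^ n) = (r : ℂ)) ∧
       (∀ n : ℕ, ∃ r : ℝ, 0 < r ∧ hankelDet u n = (r : ℂ))) := by
  have moments_real : (∀ n, ∃ r : ℝ, u (X ^ n) = r) ↔ ∀ n, (u (X ^ n)).im = 0 :=
    forall_congr' fun _ => Complex.conj_eq_iff_real.symm.trans Complex.conj_eq_iff_im
  have criterion := (realRestriction u).pos_of_nonneg_iff_det_hankelMatrix_pos
  constructor
  · intro hu
    have him := hu.im_moment_eq_zero
    refine ⟨moments_real.2 him, fun n => ⟨_, ?_, hankelDet_eq_ofReal_det him n⟩⟩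
    exact criterion.1 ((posDefFunctional_iff him).1 hu) n
  · rintro ⟨hmom, hdet⟩
    have him := moments_real.1 hmom
    refine (posDefFunctional_iff him).2 (criterion.2 fun n => ?_)
    obtain ⟨r, hr, h⟩ := hdet n
    rw [hankelDet_eq_ofReal_det him, Complex.ofReal_inj] at h
    exact h ▸ hr
end

section
/- Every polynomial π with real coefficients that is nonnegative for all real x can be written as a sum of two squares of real polynomials: π(x) = P(x)² + Q(x)². -/
open Polynomial

private lemma brahmagupta (A B P Q : Polynomial ℝ) :
    (A ^ 2 + B ^ 2) * (P ^ 2 + Q ^ 2) = (A*P - B*Q) ^ 2 + (A*Q + B*P) ^ 2 := by ring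

private lemma aux : ∀ n : ℕ, ∀ p : Polynomial ℝ, p.natDegree ≤ n →
    (∀ x : ℝ, 0 ≤ p.eval x) → ∃ P Q : Polynomial ℝ, p = P ^ 2 + Q ^ 2 := by
  intro n
  induction n using Nat.strong_induction_on with
  | _ n ih =>
  intro p hdeg h
  by_cases h0 : p.natDegree = 0
  · obtain ⟨c, rfl⟩ := natDegree_eq_zero.mp h0
    have hc : 0 ≤ c := by simpa using h 0
    refine ⟨C (Real.sqrt c), 0, ?_⟩
    rw [← C_pow, Real.sq_sqrt hc]; ring
  · have hp0 : p ≠ 0 := fun hp => h0 (by simp [hp])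
    have key : ∃ A B q : Polynomial ℝ, p = (A ^ 2 + B ^ 2) * q ∧
        (A ^ 2 + B ^ 2).natDegree = 2 ∧ (∀ x, 0 ≤ q.eval x) := by
      by_cases hr : ∃ r : ℝ, p.eval r = 0
      · obtain ⟨r, hr⟩ := hr
        have hmin : IsLocalMin (fun x => p.eval x) r :=
          Filter.Eventually.of_forall (fun x => by simpa [hr] using h x)
        have hder : p.derivative.eval r = 0 := by
          rw [← Polynomial.deriv]; exact hmin.deriv_eq_zero
        obtain ⟨q₁, hq₁⟩ := (dvd_iff_isRoot.mpr hr : (X - C r) ∣ p)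
        have hq₁r : q₁.eval r = 0 := by
          rw [hq₁, derivative_mul] at hder
          simpa using hder
        obtain ⟨q, hq⟩ := (dvd_iff_isRoot.mpr hq₁r : (X - C r) ∣ q₁)
        refine ⟨X - C r, 0, q, (by rw [hq₁, hq]; ring), (by simp), ?_⟩
        have hpq : ∀ x : ℝ, p.eval x = (x - r)^2 * q.eval x := by
          intro x
          have := congrArg (Polynomial.eval x) (by rw [hq₁, hq]; ring : p = (X - C r)^2 * q)
          simpa using this
        have hne : ∀ x : ℝ, x ≠ r → 0 ≤ q.eval x := by
          intro x hx
          have h1 := h x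
          have h2 : (0:ℝ) < (x - r)^2 := pow_two_pos_of_ne_zero (sub_ne_zero.mpr hx)
          nlinarith [hpq x]
        intro x
        rcases eq_or_ne x r with rfl | hx
        · have hcont : Filter.Tendsto (fun y => q.eval y) (nhdsWithin x {x}ᶜ) (nhds (q.eval x)) :=
            (q.continuousAt).continuousWithinAt
          exact ge_of_tendsto hcont (eventually_mem_nhdsWithin.mono fun y hy => hne y hy)
        · exact hne x hx
      · push_neg at hr
        have hdegpos : 0 < (p.map (algebraMap ℝ ℂ)).degree := by
          rw [degree_map]
          exact natDegree_pos_iff_degree_pos.mp (Nat.pos_of_ne_zero h0)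
        obtain ⟨z, hz⟩ := Complex.exists_root hdegpos
        have heval : ∀ x : ℝ, (p.map (algebraMap ℝ ℂ)).eval (x : ℂ) = ((p.eval x : ℝ) : ℂ) := by
          intro x
          rw [eval_map]
          exact eval₂_at_apply _ x
        have him : z.im ≠ 0 := by
          intro him
          have hzre : z = (z.re : ℂ) := Complex.ext rfl (by simp [him])
          have := hz
          rw [IsRoot, hzre, heval] at this
          exact hr z.re (by exact_mod_cast this)
        have hzc : (p.map (algebraMap ℝ ℂ)).eval ((starRingEnd ℂ) z) = 0 := by
          have h1 : (starRingEnd ℂ) ((p.map (algebraMap ℝ ℂ)).eval z) = 0 := by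
            rw [hz]; simp
          rw [← h1, eval_map, eval_map, hom_eval₂]
          congr 1
          ext x
          simp
        have hzne : z ≠ (starRingEnd ℂ) z := by
          intro hzz
          exact him (Complex.conj_eq_iff_im.mp hzz.symm)
        have hcop : IsCoprime (X - C z) (X - C ((starRingEnd ℂ) z)) :=
          isCoprime_X_sub_C_of_isUnit_sub (sub_ne_zero.mpr hzne).isUnit
        have hdvdC : (X - C z) * (X - C ((starRingEnd ℂ) z)) ∣ p.map (algebraMap ℝ ℂ) :=
          hcop.mul_dvd (dvd_iff_isRoot.mpr hz) (dvd_iff_isRoot.mpr hzc)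
        set quad : Polynomial ℝ := (X - C z.re) ^ 2 + (C z.im) ^ 2 with hquad
        have e1 : z + (starRingEnd ℂ) z = ((2 * z.re : ℝ) : ℂ) := by
          rw [Complex.add_conj]
        have e2 : z * (starRingEnd ℂ) z = ((z.re^2 + z.im^2 : ℝ) : ℂ) := by
          rw [Complex.mul_conj]
          norm_cast
          rw [Complex.normSq_apply]; ring
        have quadmap : quad.map (algebraMap ℝ ℂ) = (X - C z) * (X - C ((starRingEnd ℂ) z)) := by
          have expand : (X - C z) * (X - C ((starRingEnd ℂ) z))
              = X^2 - C (z + (starRingEnd ℂ) z) * X + C (z * (starRingEnd ℂ) z) := by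
            rw [C_add, C_mul]; ring
          rw [expand, e1, e2, hquad]
          simp only [Polynomial.map_add, Polynomial.map_sub, Polynomial.map_pow,
            Polynomial.map_mul, map_X, map_C, Complex.coe_algebraMap,
            Complex.ofReal_mul, Complex.ofReal_add, Complex.ofReal_pow,
            Complex.ofReal_ofNat, C_add, C_mul, C_pow, map_ofNat]
          ring
        have hdvd : quad ∣ p := by
          rw [← map_dvd_map' (algebraMap ℝ ℂ), quadmap]
          exact hdvdC
        obtain ⟨q, hq⟩ := hdvd
        refine ⟨X - C z.re, C z.im, q, hq, ?_, ?_⟩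
        · have hform : quad = C 1 * X ^ 2 + C (-(2 * z.re)) * X + C (z.re^2 + z.im^2) := by
            rw [hquad]
            simp only [C_neg, C_mul, C_add, C_pow, C_1, map_ofNat]
            ring
          rw [← hquad, hform, natDegree_quadratic one_ne_zero]
        · intro x
          have hx := h x
          have hev : p.eval x = ((x - z.re)^2 + z.im^2) * q.eval x := by
            rw [hq]; simp [hquad]
          have hqq : (0:ℝ) < (x - z.re)^2 + z.im^2 :=
            add_pos_of_nonneg_of_pos (sq_nonneg _) (pow_two_pos_of_ne_zero him)
          nlinarith [hev, hqq, hx]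
    obtain ⟨A, B, q, hfac, hdeg2, hqn⟩ := key
    have hq0 : q ≠ 0 := by rintro rfl; exact hp0 (by rw [hfac, mul_zero])
    have hAB0 : A ^ 2 + B ^ 2 ≠ 0 := by
      intro hz; rw [hz] at hdeg2; simp at hdeg2
    have hdq : q.natDegree < n := by
      have hnd := natDegree_mul hAB0 hq0
      rw [hfac] at h0 hdeg
      omega
    obtain ⟨P, Q, hPQ⟩ := ih q.natDegree hdq q le_rfl hqn
    exact ⟨A*P - B*Q, A*Q + B*P, by rw [hfac, hPQ, brahmagupta]⟩

/-- Every real polynomial nonnegative on `ℝ` is a sum of two squares of real polynomials. -/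
theorem nonneg_poly_sum_two_squares (p : Polynomial ℝ)
    (h : ∀ x : ℝ, 0 ≤ p.eval x) :
    ∃ P Q : Polynomial ℝ, p = P ^ 2 + Q ^ 2 :=
  aux p.natDegree p le_rfl h
end

section
/- (Favard's theorem) Let (β_n)_{n≥0} and (γ_n)_{n≥0} be sequences of complex numbers and define monic polynomials by P_{-1} = 0, P_0 = 1, P_{n+1}(x) = (x − β_n) P_n(x) − γ_n P_{n−1}(x). Then there exists a unique linear functional u on polynomials with ⟨u,1⟩ = γ_0 and ⟨u, P_n P_m⟩ = 0 for n ≠ m; moreover u is regular with OPS (P_n) if and only if γ_n ≠ 0 for all n, and satisfies ⟨u, P_n²⟩ = γ_0 γ_1 ⋯ γ_n for all n. -/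
open Polynomial

/-- The linear functional on polynomials given by a moment sequence `μ`. -/
noncomputable def favardAuxU (μ : ℕ → ℂ) : Polynomial ℂ →ₗ[ℂ] ℂ where
  toFun p := p.sum fun k c => c * μ k
  map_add' p q := Polynomial.sum_add_index p q _ (fun _ => zero_mul _)
    (fun _ _ _ => add_mul _ _ _)
  map_smul' c p := by
    show (c • p).sum (fun k a => a * μ k) = c * p.sum (fun k a => a * μ k)
    rw [Polynomial.sum_smul_index _ _ _ (fun i => zero_mul (μ i)),
      Polynomial.sum_def, Polynomial.sum_def, Finset.mul_sum]
    exact Finset.sum_congr rfl fun k _ => by ring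

/-- Moment sequence making the `P n` "orthogonal". -/
noncomputable def favardAuxMu (γ : ℕ → ℂ) (P : ℕ → Polynomial ℂ) : ℕ → ℂ
  | n => (if n = 0 then γ 0 else 0) -
      ∑ k ∈ (Finset.range n).attach, (P n).coeff k * favardAuxMu γ P k
  decreasing_by exact Finset.mem_range.mp k.2

theorem favardAuxMu_def (γ : ℕ → ℂ) (P : ℕ → Polynomial ℂ) (n : ℕ) :
    favardAuxMu γ P n = (if n = 0 then γ 0 else 0) -
      ∑ k ∈ Finset.range n, (P n).coeff k * favardAuxMu γ P k := by
  rw [favardAuxMu, ← Finset.sum_attach (Finset.range n)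
    (fun k => (P n).coeff k * favardAuxMu γ P k)]

/-- Favard's theorem: given the monic polynomials `P` defined by the three-term recurrence
with coefficients `β, γ`, there is a unique linear functional `u` with `⟨u,1⟩ = γ₀` and
`⟨u, Pₙ Pₘ⟩ = 0` for `n ≠ m`; it satisfies `⟨u, Pₙ²⟩ = γ₀ γ₁ ⋯ γₙ`, and `u` is regular
with OPS `P` iff all `γₙ ≠ 0`. -/
theorem favard (β γ : ℕ → ℂ) (P : ℕ → Polynomial ℂ)
    (hP0 : P 0 = 1) (hP1 : P 1 = X - C (β 0))
    (hrec : ∀ n, 1 ≤ n → P (n + 1) = (X - C (β n)) * P n - C (γ n) * P (n - 1)) :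
    (∃! u : Polynomial ℂ →ₗ[ℂ] ℂ,
        u 1 = γ 0 ∧ ∀ m n, m ≠ n → u (P m * P n) = 0) ∧
    (∀ u : Polynomial ℂ →ₗ[ℂ] ℂ,
      (u 1 = γ 0 ∧ ∀ m n, m ≠ n → u (P m * P n) = 0) →
        ((∀ n, u (P n * P n) = ∏ j ∈ Finset.range (n + 1), γ j) ∧
         (((∀ n, (P n).degree = n) ∧ (∀ m n, m ≠ n → u (P m * P n) = 0) ∧
            (∀ n, u (P n * P n) ≠ 0)) ↔ (∀ n, γ n ≠ 0)))) := by
  -- monicity and degrees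
  have hmono : ∀ n, (P n).Monic ∧ (P n).natDegree = n := by
    intro n
    induction n using Nat.strong_induction_on with
    | _ n ih =>
      match n with
      | 0 => simp [hP0, monic_one]
      | 1 => simp [hP1, monic_X_sub_C]
      | (m + 2) =>
        obtain ⟨h1m, h1d⟩ := ih (m + 1) (by omega)
        obtain ⟨h0m, h0d⟩ := ih m (by omega)
        have hmul : ((X - C (β (m + 1))) * P (m + 1)).Monic :=
          (monic_X_sub_C _).mul h1m
        have hmuld : ((X - C (β (m + 1))) * P (m + 1)).natDegree = m + 2 := by
          rw [(monic_X_sub_C _).natDegree_mul h1m, natDegree_X_sub_C, h1d]; omega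
        have hbig : ((X - C (β (m + 1))) * P (m + 1)).degree = ((m + 2 : ℕ) : WithBot ℕ) := by
          rw [degree_eq_natDegree hmul.ne_zero, hmuld]
        have hdlt : (C (γ (m + 1)) * P m).degree <
            ((X - C (β (m + 1))) * P (m + 1)).degree := by
          rw [hbig]
          refine lt_of_le_of_lt (degree_mul_le _ _) ?_
          refine lt_of_le_of_lt (add_le_add degree_C_le degree_le_natDegree) ?_
          rw [h0d, zero_add]
          exact_mod_cast (show m < m + 2 by omega)
        have hPm2 := hrec (m + 1) (by omega)
        simp only [Nat.add_sub_cancel] at hPm2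
        constructor
        · rw [hPm2]; exact hmul.sub_of_left hdlt
        · rw [hPm2, sub_eq_add_neg]
          apply natDegree_eq_of_degree_eq_some
          rw [degree_add_eq_left_of_degree_lt (by rwa [degree_neg]), hbig]
  have hdeg : ∀ j : ℕ, (P j).degree = (j : WithBot ℕ) := by
    intro j
    rw [degree_eq_natDegree (hmono j).1.ne_zero, (hmono j).2]
  -- `P k - X ^ k` has degree `< k`
  have hsublt : ∀ k : ℕ, (P k - X ^ k).degree < (k : WithBot ℕ) := by
    intro k
    have := degree_sub_lt (p := P k) (q := X ^ k)
      (by rw [hdeg k, degree_X_pow]) (hmono k).1.ne_zero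
      (by rw [(hmono k).1.leadingCoeff, leadingCoeff_X_pow])
    rwa [hdeg k] at this
  -- the functional
  set μ := favardAuxMu γ P with hμ
  set u := favardAuxU μ with hu
  have hu_apply : ∀ p : Polynomial ℂ,
      u p = ∑ k ∈ Finset.range (p.natDegree + 1), p.coeff k * μ k := by
    intro p
    show p.sum (fun k c => c * μ k) = _
    exact p.sum_over_range' (f := fun k c => c * μ k) (fun _ => zero_mul _) _ (lt_add_one _)
  have huC : ∀ (a : ℂ) (q : Polynomial ℂ), u (C a * q) = a * u q := by
    intro a q
    rw [← smul_eq_C_mul, map_smul, smul_eq_mul]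
  have huP : ∀ n, u (P n) = if n = 0 then γ 0 else 0 := by
    intro n
    obtain ⟨hm, hd⟩ := hmono n
    rw [hu_apply, hd, Finset.sum_range_succ]
    have hc : (P n).coeff n = 1 := by
      have := hm.coeff_natDegree
      rwa [hd] at this
    rw [hc, one_mul, hμ, favardAuxMu_def]
    ring
  have hu1 : u 1 = γ 0 := by
    rw [← hP0, huP]; simp
  -- X * P n expansion
  have hXP : ∀ n, 1 ≤ n →
      X * P n = P (n + 1) + C (β n) * P n + C (γ n) * P (n - 1) := by
    intro n hn
    rw [hrec n hn]; ring
  -- the key induction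
  have key : ∀ k : ℕ, (∀ n, k < n → u (X ^ k * P n) = 0) ∧
      (u (X ^ k * P k) = ∏ j ∈ Finset.range (k + 1), γ j) := by
    intro k
    induction k with
    | zero =>
      constructor
      · intro n hn
        rw [pow_zero, one_mul, huP, if_neg (by omega)]
      · rw [pow_zero, one_mul, huP, if_pos rfl, Finset.prod_range_one]
    | succ k ih =>
      obtain ⟨ih1, ih2⟩ := ih
      have step : ∀ n, 1 ≤ n → u (X ^ (k + 1) * P n) =
          u (X ^ k * P (n + 1)) + β n * u (X ^ k * P n) + γ n * u (X ^ k * P (n - 1)) := by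
        intro n hn
        have h1 : X ^ (k + 1) * P n = X ^ k * (X * P n) := by ring
        rw [h1, hXP n hn, mul_add, mul_add, map_add, map_add]
        have e1 : X ^ k * (C (β n) * P n) = C (β n) * (X ^ k * P n) := by ring
        have e2 : X ^ k * (C (γ n) * P (n - 1)) = C (γ n) * (X ^ k * P (n - 1)) := by ring
        rw [e1, e2, huC, huC]
      constructor
      · intro n hn
        rw [step n (by omega), ih1 (n + 1) (by omega), ih1 n (by omega),
          ih1 (n - 1) (by omega)]
        ring
      · rw [step (k + 1) (by omega), ih1 (k + 2) (by omega), ih1 (k + 1) (by omega)]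
        simp only [Nat.add_sub_cancel, ih2]
        rw [Finset.prod_range_succ (f := γ) (n := k + 1)]
        ring
  -- low-degree annihilation
  have hqlow : ∀ (n : ℕ) (q : Polynomial ℂ), q.degree < (n : WithBot ℕ) →
      u (q * P n) = 0 := by
    intro n q hq
    rcases eq_or_ne q 0 with rfl | hq0
    · simp
    have hdn : q.natDegree < n := (natDegree_lt_iff_degree_lt hq0).mpr hq
    conv_lhs => rw [q.as_sum_range' (q.natDegree + 1) (lt_add_one _)]
    rw [Finset.sum_mul, map_sum]
    refine Finset.sum_eq_zero fun k hk => ?_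
    rw [← C_mul_X_pow_eq_monomial, mul_assoc, huC,
      (key k).1 n (by have := Finset.mem_range.mp hk; omega), mul_zero]
  -- orthogonality
  have horth : ∀ m n, m ≠ n → u (P m * P n) = 0 := by
    intro m n hmn
    rcases lt_or_gt_of_ne hmn with h | h
    · exact hqlow n (P m) (by rw [hdeg m]; exact_mod_cast h)
    · rw [mul_comm]
      exact hqlow m (P n) (by rw [hdeg n]; exact_mod_cast h)
  -- squares
  have hsq : ∀ n, u (P n * P n) = ∏ j ∈ Finset.range (n + 1), γ j := by
    intro n
    have hspl : P n * P n = (P n - X ^ n) * P n + X ^ n * P n := by ring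
    rw [hspl, map_add, hqlow n _ (hsublt n), zero_add, (key n).2]
  -- uniqueness
  have huniq : ∀ v : Polynomial ℂ →ₗ[ℂ] ℂ,
      (v 1 = γ 0 ∧ ∀ m n, m ≠ n → v (P m * P n) = 0) → v = u := by
    intro v ⟨hv1, hvorth⟩
    have hvP : ∀ n, v (P n) = if n = 0 then γ 0 else 0 := by
      intro n
      match n with
      | 0 => simpa [hP0] using hv1
      | (m + 1) =>
        have := hvorth 0 (m + 1) (by omega)
        rw [hP0, one_mul] at this
        simpa using this
    have hmonagree : ∀ k, v (X ^ k) = u (X ^ k) := by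
      intro k
      induction k using Nat.strong_induction_on with
      | _ k ih =>
        have hsplit : (X : Polynomial ℂ) ^ k = P k - (P k - X ^ k) := by ring
        have hnd : (P k - X ^ k).natDegree < k + 1 := by
          rcases eq_or_ne (P k - X ^ k) 0 with h | h
          · simp [h]
          · have := (natDegree_lt_iff_degree_lt h).mpr (hsublt k)
            omega
        have hlowagree : v (P k - X ^ k) = u (P k - X ^ k) := by
          have hexp := (P k - X ^ k).as_sum_range' (k + 1) hnd
          rw [hexp, map_sum, map_sum]
          refine Finset.sum_congr rfl fun j hj => ?_
          rcases eq_or_ne j k with rfl | hjk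
          · have hc : (P j - X ^ j).coeff j = 0 :=
              coeff_eq_zero_of_degree_lt (hsublt j)
            simp [hc]
          · have hj' : j < k := by
              have := Finset.mem_range.mp hj; omega
            rw [← C_mul_X_pow_eq_monomial, ← smul_eq_C_mul, map_smul, map_smul,
              ih j hj']
        have hws : ∀ w : Polynomial ℂ →ₗ[ℂ] ℂ, w (X ^ k) = w (P k) - w (P k - X ^ k) := by
          intro w
          rw [← map_sub]
          exact congrArg w (by ring)
        rw [hws v, hws u, hvP k, huP k, hlowagree]
    refine Polynomial.lhom_ext' fun n => ?_
    refine LinearMap.ext fun a => ?_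
    simp only [LinearMap.coe_comp, Function.comp_apply]
    rw [← C_mul_X_pow_eq_monomial, ← smul_eq_C_mul, map_smul, map_smul, hmonagree n]
  -- assemble
  refine ⟨⟨u, ⟨hu1, horth⟩, huniq⟩, ?_⟩
  intro v hv
  have hvu : v = u := huniq v hv
  subst hvu
  refine ⟨hsq, ?_⟩
  constructor
  · rintro ⟨_, _, hne⟩ n hn0
    have h := hne n
    rw [hsq n] at h
    exact h (Finset.prod_eq_zero (Finset.self_mem_range_succ n) hn0)
  · intro hγ
    exact ⟨hdeg, hv.2, fun n => by
      rw [hsq n]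
      exact Finset.prod_ne_zero_iff.mpr fun j _ => hγ j⟩
end

section
/- (Gauss–Jacobi–Christoffel quadrature) Let u be a positive-definite linear functional with monic OPS (P_n), and let x_{n,1}, …, x_{n,n} be the zeros of P_n. Then for each n ≥ 1 there exist positive reals A_{n,1}, …, A_{n,n} such that ⟨u, p⟩ = ∑_{j=1}^n A_{n,j} p(x_{n,j}) for every polynomial p of degree at most 2n − 1; moreover ∑_{j=1}^n A_{n,j} = ⟨u, 1⟩. -/
open Polynomial

/-!
Write `p = Pₙ q + r` with `deg q, deg r < n`. Orthogonality kills `⟨u, Pₙ q⟩`, and `r` equals its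
Lagrange interpolant at the zeros of `Pₙ`, where `p` and `r` agree; hence the quadrature with
weights `A_j = ⟨u, ℓ_j⟩` (`ℓ_j` the Lagrange basis) is exact in degree `< 2n`. Applying it to
`ℓ_j²` gives `A_j = ⟨u, ℓ_j²⟩ > 0`, and applying it to `1` gives `∑ A_j = ⟨u, 1⟩`.
-/

open Finset

namespace Polynomial.Sequence

variable {K : Type*} [Field K]

theorem map_mul_eq_zero_of_degree_lt (u : K[X] →ₗ[K] K) (S : Sequence K) (f : K[X]) {n : ℕ}
    (horth : ∀ m < n, u (f * S m) = 0) {q : K[X]} (hq : q.degree < n) : u (f * q) = 0 := by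
  have hspan : degreeLT K n ≤ LinearMap.ker (u ∘ₗ LinearMap.mulLeft K f) := by
    rw [← S.span_degreeLT fun i _ ↦ (leadingCoeff_ne_zero.mpr (S.ne_zero i)).isUnit,
      Submodule.span_le]
    rintro _ ⟨m, hm, rfl⟩
    exact horth m hm
  exact hspan (mem_degreeLT.mpr hq)

end Polynomial.Sequence

namespace Lagrange

variable {F K ι : Type*} [Field F] [Field K] [DecidableEq ι] {s : Finset ι} {v : ι → F}

theorem map_basis (f : F →+* K) (s : Finset ι) (v : ι → F) (i : ι) :
    (Lagrange.basis s v i).map f = Lagrange.basis s (f ∘ v) i := by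
  simp [Lagrange.basis, basisDivisor, Polynomial.map_prod]

theorem map_eq_sum_basis_mul_eval (u : F[X] →ₗ[F] F) (hvs : Set.InjOn v s) {r : F[X]}
    (hr : r.degree < #s) : u r = ∑ i ∈ s, u (Lagrange.basis s v i) * r.eval (v i) := by
  conv_lhs => rw [eq_interpolate hvs hr, interpolate_apply, map_sum]
  refine sum_congr rfl fun i _ ↦ ?_
  rw [← smul_eq_C_mul, map_smul, smul_eq_mul, mul_comm]

theorem map_eq_sum_basis_mul_eval_of_orthogonal (u : F[X] →ₗ[F] F) (hvs : Set.InjOn v s)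
    (horth : ∀ q : F[X], q.degree < #s → u (nodal s v * q) = 0) {p : F[X]}
    (hp : p.degree < ↑(2 * #s)) :
    u p = ∑ i ∈ s, u (Lagrange.basis s v i) * p.eval (v i) := by
  have hdiv := modByMonic_add_div p (nodal s v)
  have hquot : (p /ₘ nodal s v).degree < #s := by
    by_cases hq : p /ₘ nodal s v = 0
    · simp [hq]
    have hp0 : p ≠ 0 := by rintro rfl; simp at hq
    have hpdeg := (natDegree_lt_iff_degree_lt hp0).mpr hp
    rw [degree_eq_natDegree hq, Nat.cast_lt, natDegree_divByMonic _ nodal_monic, natDegree_nodal]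
    omega
  have hrem : (p %ₘ nodal s v).degree < #s := degree_nodal (s := s) (v := v) ▸
    degree_modByMonic_lt p nodal_monic
  rw [← hdiv, map_add, horth _ hquot, add_zero, map_eq_sum_basis_mul_eval u hvs hrem]
  refine sum_congr rfl fun i hi ↦ ?_
  simp [eval_nodal_at_node hi]

theorem map_basis_eq_map_basis_sq (u : F[X] →ₗ[F] F) (hvs : Set.InjOn v s)
    (hexact : ∀ p : F[X], p.degree < ↑(2 * #s) →
      u p = ∑ i ∈ s, u (Lagrange.basis s v i) * p.eval (v i))
    {i : ι} (hi : i ∈ s) : u (Lagrange.basis s v i) = u (Lagrange.basis s v i ^ 2) := by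
  have hcard : 0 < #s := card_pos.mpr ⟨i, hi⟩
  have hdeg : (Lagrange.basis s v i ^ 2).degree < ↑(2 * #s) := by
    refine (degree_le_natDegree).trans_lt ?_
    rw [natDegree_pow, natDegree_basis hvs hi, Nat.cast_lt]
    omega
  rw [hexact _ hdeg, sum_eq_single_of_mem i hi, eval_pow, eval_basis_self hvs hi]
  · ring
  · intro j _ hji
    rw [eval_pow, eval_basis_of_ne hji.symm ‹j ∈ s›]
    ring

end Lagrange

open Lagrange in
theorem gauss_jacobi_christoffel_quadrature_general (u : Polynomial ℂ →ₗ[ℂ] ℂ)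
    (hpos : PosDefFunctional u)
    (P : ℕ → Polynomial ℂ)
    (hdeg : ∀ n, (P n).degree = n)
    (horth : ∀ m n, m ≠ n → u (P m * P n) = 0)
    (n : ℕ) (hn : 1 ≤ n)
    (xs : Fin n → ℝ) (hmono : StrictMono xs)
    (hroots : P n = ∏ j : Fin n, (X - C ((xs j : ℝ) : ℂ))) :
    ∃ A : Fin n → ℝ, (∀ j, 0 < A j) ∧
      (∀ p : Polynomial ℂ, p.degree ≤ (2 * n - 1 : ℕ) →
        u p = ∑ j : Fin n, (A j : ℂ) * p.eval ((xs j : ℝ) : ℂ)) ∧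
      (∑ j : Fin n, (A j : ℂ)) = u 1 := by
  set v : Fin n → ℂ := fun j ↦ (xs j : ℂ)
  have hxs : Set.InjOn xs (univ : Finset (Fin n)) := hmono.injective.injOn
  have hv : Set.InjOn v (univ : Finset (Fin n)) :=
    (Complex.ofReal_injective.comp hmono.injective).injOn
  have hnodal : nodal univ v = P n := by rw [nodal_eq, hroots]
  have hexact (p : ℂ[X]) (hp : p.degree < ↑(2 * #(univ : Finset (Fin n)))) :
      u p = ∑ j, u (Lagrange.basis univ v j) * p.eval (v j) := by
    refine map_eq_sum_basis_mul_eval_of_orthogonal u hv (fun q hq ↦ ?_) hp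
    rw [hnodal]
    exact Sequence.map_mul_eq_zero_of_degree_lt u ⟨P, hdeg⟩ (P n)
      (fun m hm ↦ horth n m hm.ne') (by simpa using hq)
  have hweight (j : Fin n) : ∃ r : ℝ, 0 < r ∧ u (Lagrange.basis univ v j) = r := by
    obtain ⟨r, hr, hur⟩ := hpos (Lagrange.basis univ xs j ^ 2)
      (pow_ne_zero 2 (basis_ne_zero hxs (mem_univ j))) fun x ↦ by simp [sq_nonneg]
    refine ⟨r, hr, ?_⟩
    rw [map_basis_eq_map_basis_sq u hv hexact (mem_univ j), ← hur, Polynomial.map_pow, map_basis]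
    rfl
  choose A hA huA using hweight
  have hdeg_lt {p : ℂ[X]} (hp : p.degree ≤ (2 * n - 1 : ℕ)) :
      p.degree < ↑(2 * #(univ : Finset (Fin n))) :=
    hp.trans_lt (by simp only [card_univ, Fintype.card_fin]; exact_mod_cast (by omega))
  refine ⟨A, hA, fun p hp ↦ by simp_rw [hexact p (hdeg_lt hp), huA]; rfl, ?_⟩
  simpa [huA] using (hexact 1 (hdeg_lt (by simp))).symm

/-- Gauss–Jacobi–Christoffel quadrature formula: there are positive weights `A_{n,j}` at the
zeros of `Pₙ` such that `⟨u, p⟩ = ∑ⱼ A_{n,j} p(x_{n,j})` for all `p` of degree `≤ 2n − 1`,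
and the weights sum to `⟨u, 1⟩`. -/
theorem gauss_jacobi_christoffel_quadrature (u : Polynomial ℂ →ₗ[ℂ] ℂ)
    (hpos : PosDefFunctional u)
    (P : ℕ → Polynomial ℂ)
    (hmonic : ∀ n, (P n).Monic) (hdeg : ∀ n, (P n).degree = n)
    (horth : ∀ m n, m ≠ n → u (P m * P n) = 0)
    (hreg : ∀ n, u (P n * P n) ≠ 0)
    (n : ℕ) (hn : 1 ≤ n)
    (xs : Fin n → ℝ) (hmono : StrictMono xs)
    (hroots : P n = ∏ j : Fin n, (X - C ((xs j : ℝ) : ℂ))) :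
    ∃ A : Fin n → ℝ, (∀ j, 0 < A j) ∧
      (∀ p : Polynomial ℂ, p.degree ≤ (2 * n - 1 : ℕ) →
        u p = ∑ j : Fin n, (A j : ℂ) * p.eval ((xs j : ℝ) : ℂ)) ∧
      (∑ j : Fin n, (A j : ℂ)) = u 1 :=
  gauss_jacobi_christoffel_quadrature_general u hpos P hdeg horth n hn xs hmono hroots
end

section
/- Let u be a regular linear functional satisfying D(φu) = ψu with nonzero φ ∈ P₂ and ψ ∈ P₁. Then ψ has degree exactly 1, φ is not identically zero, and d_n := n·(leading coefficient of φ's degree-2 term) + ψ' ≠ 0 for all n ≥ 0 (writing φ(x) = ax² + bx + c, ψ(x) = px + q, this says na + p ≠ 0 for all n ≥ 0). -/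
/-!
Put `S r = ψ r + φ r'`. The Pearson equation says `u ∘ S = 0`, and `S (π ρ) = ρ S π + φ π ρ'`.
Regularity means that no nonzero `t` satisfies `u (t s) = 0` for all `s`; since every polynomial
is a derivative, `S π = 0` therefore forces `φ π = 0`, and `φ = 0` would force `ψ = 0`.
If `n a + p = 0`, the coefficient `(n a + p) π_n` of `x ^ (n + 1)` in `S π` vanishes, so `S` maps
polynomials of degree `≤ n` into themselves. This endomorphism is injective because `φ ≠ 0`, hence
surjective, so `1 = S π` and `u 1 = 0`, contradicting regularity. The case `n = 0` is `p ≠ 0`.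
-/

open Polynomial

theorem Polynomial.exists_derivative_eq {K : Type*} [Field K] [CharZero K] (s : K[X]) :
    ∃ ρ : K[X], derivative ρ = s := by
  induction s using Polynomial.induction_on' with
  | add f g hf hg =>
    obtain ⟨ρf, rfl⟩ := hf
    obtain ⟨ρg, rfl⟩ := hg
    exact ⟨ρf + ρg, derivative_add⟩
  | monomial n a =>
    refine ⟨monomial (n + 1) (a / (n + 1)), ?_⟩
    rw [derivative_monomial, Nat.add_sub_cancel, Nat.cast_succ,
      div_mul_cancel₀ _ (Nat.cast_add_one_ne_zero n)]

theorem Polynomial.degree_sub_C_mul_lt {K : Type*} [Field K] {r f : K[X]} {k : ℕ}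
    (hf : f.degree = k) (hr : r.degree ≤ k) :
    (r - C (r.coeff k / f.leadingCoeff) * f).degree < k := by
  have hlc : f.leadingCoeff ≠ 0 := leadingCoeff_ne_zero.mpr (by rintro rfl; simp at hf)
  rw [degree_lt_iff_coeff_zero]
  intro j hj
  rcases hj.lt_or_eq with hj | rfl
  · have hj' : (k : WithBot ℕ) < j := by exact_mod_cast hj
    have hrj : r.coeff j = 0 := coeff_eq_zero_of_degree_lt (hr.trans_lt hj')
    have hfj : f.coeff j = 0 := coeff_eq_zero_of_degree_lt (hf.trans_lt hj')
    rw [coeff_sub, coeff_C_mul, hrj, hfj, mul_zero, sub_zero]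
  · rw [coeff_sub, coeff_C_mul, ← natDegree_eq_of_degree_eq_some hf, ← leadingCoeff,
      natDegree_eq_of_degree_eq_some hf, div_mul_cancel₀ _ hlc, sub_self]

theorem Polynomial.coeff_X_mul_derivative {R : Type*} [Semiring R] (π : R[X]) (j : ℕ) :
    (X * derivative π).coeff j = j * π.coeff j := by
  cases j with
  | zero => simp
  | succ j => rw [coeff_X_mul, coeff_derivative, ← Nat.cast_succ, Nat.cast_comm]

structure IsOrthogonalSequence {K : Type*} [Field K] (u : K[X] →ₗ[K] K) (P : ℕ → K[X]) :
    Prop where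
  degree_eq : ∀ n, (P n).degree = n
  apply_mul_eq_zero : ∀ m n, m ≠ n → u (P m * P n) = 0
  apply_mul_self_ne_zero : ∀ n, u (P n * P n) ≠ 0

namespace IsOrthogonalSequence

variable {K : Type*} [Field K] {u : K[X] →ₗ[K] K} {P : ℕ → K[X]}

theorem apply_mul_eq_zero_of_degree_lt (hP : IsOrthogonalSequence u P) {n : ℕ} {r : K[X]}
    (hr : r.degree < n) : u (P n * r) = 0 := by
  suffices ∀ k ≤ n, ∀ r : K[X], r.degree < k → u (P n * r) = 0 from this n le_rfl r hr
  intro k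
  induction k with
  | zero => intro _ r hr; simp [degree_eq_bot.mp (Nat.WithBot.lt_zero_iff.mp hr)]
  | succ k ih =>
    intro hk r hr
    set c := r.coeff k / (P k).leadingCoeff
    have hlow := ih (by omega) _ (degree_sub_C_mul_lt (hP.degree_eq k) (Order.le_of_lt_succ hr))
    have hPk : u (P n * P k) = 0 := hP.apply_mul_eq_zero n k (by omega)
    calc u (P n * r) = c • u (P n * P k) + u (P n * (r - C c * P k)) := by
          rw [← map_smul, ← map_add, smul_eq_C_mul]; ring_nf
      _ = 0 := by rw [hPk, hlow, smul_zero, add_zero]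

theorem eq_zero_of_forall_apply_mul_eq_zero (hP : IsOrthogonalSequence u P) {t : K[X]}
    (h : ∀ s, u (t * s) = 0) : t = 0 := by
  by_contra ht
  set d := t.natDegree
  set c := t.coeff d / (P d).leadingCoeff
  have hc : c ≠ 0 := div_ne_zero (leadingCoeff_ne_zero.mpr ht)
    (leadingCoeff_ne_zero.mpr (by intro h0; simpa [h0] using hP.degree_eq d))
  have hlow := hP.apply_mul_eq_zero_of_degree_lt
    (degree_sub_C_mul_lt (hP.degree_eq d) degree_le_natDegree)
  have htP : u (t * P d) = c * u (P d * P d) := by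
    calc u (t * P d) = c • u (P d * P d) + u (P d * (t - C c * P d)) := by
          rw [← map_smul, ← map_add, smul_eq_C_mul]; ring_nf
      _ = c * u (P d * P d) := by rw [hlow, add_zero, smul_eq_mul]
  exact mul_ne_zero hc (hP.apply_mul_self_ne_zero d) (htP ▸ h (P d))

theorem apply_one_ne_zero (hP : IsOrthogonalSequence u P) : u 1 ≠ 0 := by
  intro h1
  obtain ⟨c, hc⟩ : ∃ c, P 0 = C c := ⟨_, eq_C_of_degree_le_zero (hP.degree_eq 0).le⟩
  apply hP.apply_mul_self_ne_zero 0
  rw [hc, ← C_mul, ← mul_one (C (c * c)), ← smul_eq_C_mul, map_smul, h1, smul_zero]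

end IsOrthogonalSequence

noncomputable def pearsonOp {R : Type*} [CommRing R] (φ ψ : R[X]) : R[X] →ₗ[R] R[X] :=
  LinearMap.mulLeft R ψ + LinearMap.mulLeft R φ ∘ₗ derivative

section Pearson

variable {R : Type*} [CommRing R]

theorem pearsonOp_apply (φ ψ π : R[X]) : pearsonOp φ ψ π = ψ * π + φ * derivative π := rfl

theorem pearsonOp_mul (φ ψ π ρ : R[X]) :
    pearsonOp φ ψ (π * ρ) = ρ * pearsonOp φ ψ π + φ * π * derivative ρ := by
  simp only [pearsonOp_apply, derivative_mul]
  ring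

theorem coeff_pearsonOp_succ (a b c p q : R) (π : R[X]) (j : ℕ) :
    (pearsonOp (C a * X ^ 2 + C b * X + C c) (C p * X + C q) π).coeff (j + 1) =
      (j * a + p) * π.coeff j + ((j + 1) * b + q) * π.coeff (j + 1) +
        (j + 2) * c * π.coeff (j + 2) := by
  have hX2 : C a * X ^ 2 = C a * X * X := by ring
  simp only [pearsonOp_apply, hX2, add_mul, mul_assoc, coeff_add, coeff_C_mul, coeff_X_mul,
    coeff_X_mul_derivative, coeff_derivative]
  push_cast
  ring

theorem pearsonOp_mapsTo_degreeLT {a b c p q : R} {n : ℕ} (h : n * a + p = 0) :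
    Set.MapsTo (pearsonOp (C a * X ^ 2 + C b * X + C c) (C p * X + C q))
      (degreeLT R (n + 1)) (degreeLT R (n + 1)) := by
  intro π hπ
  simp only [SetLike.mem_coe, mem_degreeLT, degree_lt_iff_coeff_zero] at hπ ⊢
  intro m hm
  obtain ⟨j, rfl⟩ : ∃ j, m = j + 1 := ⟨m - 1, by omega⟩
  have hj : n ≤ j := by omega
  rw [coeff_pearsonOp_succ, hπ (j + 1) (by omega), hπ (j + 2) (by omega)]
  rcases hj.eq_or_lt with rfl | hj
  · rw [h]; ring
  · rw [hπ j hj]; ring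

end Pearson

namespace IsOrthogonalSequence

variable {K : Type*} [Field K] {u : K[X] →ₗ[K] K} {P : ℕ → K[X]} {φ ψ : K[X]}

theorem ne_zero_of_apply_pearsonOp_eq_zero (hP : IsOrthogonalSequence u P)
    (hS : ∀ r, u (pearsonOp φ ψ r) = 0) (hnz : φ ≠ 0 ∨ ψ ≠ 0) : φ ≠ 0 := by
  rintro rfl
  have hψ : ψ = 0 := hP.eq_zero_of_forall_apply_mul_eq_zero fun s => by
    simpa [pearsonOp_apply] using hS s
  exact hnz.elim (· rfl) (· hψ)

variable [CharZero K]

theorem mul_eq_zero_of_pearsonOp_eq_zero (hP : IsOrthogonalSequence u P)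
    (hS : ∀ r, u (pearsonOp φ ψ r) = 0) {π : K[X]} (hπ : pearsonOp φ ψ π = 0) : φ * π = 0 :=
  hP.eq_zero_of_forall_apply_mul_eq_zero fun s => by
    obtain ⟨ρ, rfl⟩ := exists_derivative_eq s
    simpa [pearsonOp_mul, hπ] using hS (π * ρ)

theorem not_mapsTo_pearsonOp_degreeLT (hP : IsOrthogonalSequence u P)
    (hS : ∀ r, u (pearsonOp φ ψ r) = 0) (hφ : φ ≠ 0) (n : ℕ) :
    ¬ Set.MapsTo (pearsonOp φ ψ) (degreeLT K (n + 1)) (degreeLT K (n + 1)) := by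
  intro hmaps
  have hinj : Function.Injective ((pearsonOp φ ψ).restrict hmaps) := by
    rw [← LinearMap.ker_eq_bot, Submodule.eq_bot_iff]
    rintro ⟨π, _⟩ hπ
    have hπ0 := hP.mul_eq_zero_of_pearsonOp_eq_zero hS (congrArg Subtype.val hπ)
    exact Subtype.ext ((mul_eq_zero.mp hπ0).resolve_left hφ)
  have h1 : (1 : K[X]) ∈ degreeLT K (n + 1) := by
    rw [mem_degreeLT]
    exact degree_one_le.trans_lt (by exact_mod_cast n.succ_pos)
  obtain ⟨⟨π, _⟩, hπ⟩ := LinearMap.injective_iff_surjective.mp hinj ⟨1, h1⟩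
  have hπ1 : pearsonOp φ ψ π = 1 := congrArg Subtype.val hπ
  exact hP.apply_one_ne_zero (hπ1 ▸ hS π)

end IsOrthogonalSequence

/-- If a regular functional satisfies the Pearson equation `D(φu) = ψu` with `deg φ ≤ 2`,
`deg ψ ≤ 1` and not both zero, then `deg ψ = 1`, `φ ≠ 0`, and `na + p ≠ 0` for all `n`. -/
theorem regular_pearson_admissibility (u : Polynomial ℂ →ₗ[ℂ] ℂ) (a b c p q : ℂ)
    (hreg : ∃ P : ℕ → Polynomial ℂ, (∀ n, (P n).degree = n) ∧
      (∀ m n, m ≠ n → u (P m * P n) = 0) ∧ (∀ n, u (P n * P n) ≠ 0))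
    (hnz : C a * X ^ 2 + C b * X + C c ≠ 0 ∨ C p * X + C q ≠ 0)
    (hPearson : ∀ r : Polynomial ℂ,
      -(u ((C a * X ^ 2 + C b * X + C c) * Polynomial.derivative r)) =
        u ((C p * X + C q) * r)) :
    (C p * X + C q).degree = 1 ∧ (C a * X ^ 2 + C b * X + C c) ≠ 0 ∧
      ∀ n : ℕ, (n : ℂ) * a + p ≠ 0 := by
  obtain ⟨P, hdeg, horth, hne⟩ := hreg
  have hP : IsOrthogonalSequence u P := ⟨hdeg, horth, hne⟩
  have hS : ∀ r, u (pearsonOp (C a * X ^ 2 + C b * X + C c) (C p * X + C q) r) = 0 := fun r => by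
    rw [pearsonOp_apply, map_add, ← hPearson r, neg_add_cancel]
  have hφ := hP.ne_zero_of_apply_pearsonOp_eq_zero hS hnz
  have hadm : ∀ n : ℕ, (n : ℂ) * a + p ≠ 0 := fun n hn =>
    hP.not_mapsTo_pearsonOp_degreeLT hS hφ n (pearsonOp_mapsTo_degreeLT hn)
  exact ⟨degree_linear (by simpa using hadm 0), hφ, hadm⟩
end

section
/- (Pfaff–Saalschütz identity) For every natural number n and complex a, b, c (with all denominators nonzero), ∑_{k=0}^{n} ((−n)_k (a)_k (b)_k)/((c)_k (1+a+b−c−n)_k k!) = ((c−a)_n (c−b)_n)/((c)_n (c−a−b)_n), where (x)_k is the Pochhammer symbol. -/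
open Polynomial
noncomputable def pe (x : ℂ) (k : ℕ) : ℂ := (ascPochhammer ℂ k).eval x
lemma pe_zero (x : ℂ) : pe x 0 = 1 := by simp [pe]
lemma pe_one (x : ℂ) : pe x 1 = x := by simp [pe]
lemma pe_succ_right (x : ℂ) (n : ℕ) : pe x (n+1) = pe x n * (x + n) :=
  ascPochhammer_succ_eval n x
lemma pe_succ_left (x : ℂ) (n : ℕ) : pe x (n+1) = x * pe (x+1) n := by
  simp [pe, ascPochhammer_succ_left, eval_comp]
noncomputable def gfun (n : ℕ) (a b c : ℂ) (k : ℕ) : ℂ :=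
  if k = 0 then 0
  else if k = n + 1 then -(pe a (n+1) * pe b (n+1))
  else (n.choose (k-1) : ℂ) * pe a k * pe b k * pe (c + k) (n - k) * pe (c - a - b) (n - k) *
    (((k : ℂ) - 1) * ((k : ℂ) - (n : ℂ)) - c * (c + (n : ℂ) - 1) + (a + b) * (c + (k : ℂ) - 1))

set_option maxHeartbeats 1000000 in
private lemma key (a b c : ℂ) (n : ℕ) : ∀ k ∈ Finset.range (n+1),
    ((n+1).choose k : ℂ) * pe a k * pe b k * pe (c + k) (n+1-k) * pe (c - a - b) (n+1-k)
    = (c - a + n) * (c - b + n) *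
        ((n.choose k : ℂ) * pe a k * pe b k * pe (c + k) (n-k) * pe (c - a - b) (n-k))
      + (gfun n a b c (k+1) - gfun n a b c k) := by
  intro k hk
  have hkn : k ≤ n := Finset.mem_range_succ_iff.mp hk
  rcases Nat.eq_zero_or_pos k with rfl | hkpos
  · -- k = 0
    rcases Nat.eq_zero_or_pos n with rfl | hnpos
    · simp [gfun, pe_zero, pe_one, pe_succ_right]
      ring
    · obtain ⟨m, rfl⟩ : ∃ m, n = m + 1 := ⟨n - 1, by omega⟩
      simp only [gfun, if_neg (Nat.one_ne_zero), if_neg (by omega : (1:ℕ) ≠ m+1+1),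
        Nat.choose_zero_right, Nat.sub_zero, if_pos rfl]
      norm_num
      rw [pe_succ_right c (m+1), pe_succ_left c m, pe_succ_right (c-a-b) (m+1),
        pe_succ_right (c-a-b) m]
      simp only [pe_zero, pe_one]
      push_cast
      ring
  · rcases eq_or_lt_of_le hkn with rfl | hlt
    · -- k = n
      have hg1 : gfun k a b c (k+1) = -(pe a (k+1) * pe b (k+1)) := by
        simp [gfun]
      have hch : k.choose (k-1) = k := by
        rw [← Nat.choose_symm (Nat.sub_le k 1), show k - (k-1) = 1 from by omega,
          Nat.choose_one_right]
      have hg2 : gfun k a b c k = (k : ℂ) * pe a k * pe b k *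
          (((k : ℂ) - 1) * ((k : ℂ) - (k : ℂ)) - c * (c + (k : ℂ) - 1) + (a + b) * (c + (k : ℂ) - 1)) := by
        rw [gfun, if_neg (by omega), if_neg (by omega), Nat.sub_self, hch]
        simp only [pe_zero]
        ring
      rw [hg1, hg2, show k+1-k = 1 from by omega, Nat.sub_self,
        Nat.choose_succ_self_right, Nat.choose_self,
        pe_succ_right a k, pe_succ_right b k]
      simp only [pe_zero, pe_one]
      push_cast
      ring
    · -- 1 ≤ k ≤ n-1
      obtain ⟨j, rfl⟩ : ∃ j, k = j + 1 := ⟨k - 1, by omega⟩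
      obtain ⟨m, rfl⟩ : ∃ m, n = j + m + 2 := ⟨n - j - 2, by omega⟩
      have hg1 : gfun (j+m+2) a b c (j+1+1) = ((j+m+2).choose (j+1) : ℂ) *
          pe a (j+1+1) * pe b (j+1+1) * pe (c + ((j+1+1 : ℕ) : ℂ)) m * pe (c-a-b) m *
          ((((j+1+1 : ℕ) : ℂ) - 1) * (((j+1+1 : ℕ) : ℂ) - ((j+m+2 : ℕ) : ℂ)) -
            c * (c + ((j+m+2 : ℕ) : ℂ) - 1) + (a + b) * (c + ((j+1+1 : ℕ) : ℂ) - 1)) := by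
        rw [gfun, if_neg (by omega), if_neg (by omega),
          show j+1+1-1 = j+1 from by omega, show j+m+2-(j+1+1) = m from by omega]
      have hg2 : gfun (j+m+2) a b c (j+1) = ((j+m+2).choose j : ℂ) *
          pe a (j+1) * pe b (j+1) * pe (c + ((j+1 : ℕ) : ℂ)) (m+1) * pe (c-a-b) (m+1) *
          ((((j+1 : ℕ) : ℂ) - 1) * (((j+1 : ℕ) : ℂ) - ((j+m+2 : ℕ) : ℂ)) -
            c * (c + ((j+m+2 : ℕ) : ℂ) - 1) + (a + b) * (c + ((j+1 : ℕ) : ℂ) - 1)) := by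
        rw [gfun, if_neg (by omega), if_neg (by omega),
          show j+1-1 = j from by omega, show j+m+2-(j+1) = m+1 from by omega]
      have h := Nat.choose_succ_right_eq (j+m+2) j
      rw [show j+m+2-j = m+2 from by omega] at h
      have hrel : ((j+m+2).choose (j+1) : ℂ) * ((j:ℂ)+1) = ((j+m+2).choose j : ℂ) * ((m:ℂ)+2) := by
        exact_mod_cast h
      have hm2 : ((m:ℂ)+2) ≠ 0 := by
        have : ((m+2 : ℕ) : ℂ) ≠ 0 := Nat.cast_ne_zero.mpr (by omega)
        push_cast at this; exact this
      have hC1 : ((j+m+2).choose j : ℂ) = ((j+m+2).choose (j+1) : ℂ) * ((j:ℂ)+1) / ((m:ℂ)+2) := by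
        rw [eq_div_iff hm2]; linear_combination -hrel
      rw [hg1, hg2, show j+m+2+1-(j+1) = m+2 from by omega,
        show j+m+2-(j+1) = m+1 from by omega,
        Nat.choose_succ_succ (j+m+2) j,
        show (c + ((j+1+1 : ℕ) : ℂ)) = c + ((j+1 : ℕ) : ℂ) + 1 from by push_cast; ring,
        pe_succ_right (c          + ((j+1 : ℕ) : ℂ)) (m+1),
        pe_succ_left (c + ((j+1 : ℕ) : ℂ)) m,
        pe_succ_right (c-a-b) (m+1), pe_succ_right (c-a-b) m,
        pe_succ_right a (j+1), pe_succ_right b (j+1)]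
      push_cast
      linear_combination (pe a (j+1) * pe b (j+1) * pe (c + ((j:ℂ)+1) + 1) m * pe (c-a-b) m * (-(m:ℂ) - (m:ℂ)^2 - (j:ℂ)*(m:ℂ) - (j:ℂ)*(m:ℂ)^2 - c - 3*c*(m:ℂ) - c*(m:ℂ)^2 - c*(j:ℂ) - 2*c*(j:ℂ)*(m:ℂ) - 2*c^2 - 2*c^2*(m:ℂ) - c^2*(j:ℂ) - c^3 + b + 2*b*(m:ℂ) + b*(j:ℂ) + 2*b*(j:ℂ)*(m:ℂ) + 3*b*c + 2*b*c*(m:ℂ) + 2*b*c*(j:ℂ) + 2*b*c^2 - b^2 - b^2*(j:ℂ) - b^2*c + a + 2*a*(m:ℂ) + a*(j:ℂ) + 2*a*(j:ℂ)*(m:ℂ) + 3*a*c + 2*a*c*(m:ℂ) + 2*a*c*(j:ℂ) + 2*a*c^2 - 2*a*b - 2*a*b*(j:ℂ) - 2*a*b*c - a^2 - a^2*(j:ℂ) - a^2*c)) * hrel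

lemma pe_mul (x : ℂ) (k m : ℕ) : pe x (k + m) = pe x k * pe (x + k) m := by
  rw [pe, ← ascPochhammer_mul]
  simp [pe, eval_comp]

lemma pe_neg_nat (n k : ℕ) : pe (-(n:ℂ)) k = (-1)^k * (n.descFactorial k : ℂ) := by
  induction k with
  | zero => simp [pe_zero]
  | succ k ih =>
    rw [pe_succ_right, ih, Nat.descFactorial_succ]
    rcases le_or_gt k n with h | h
    · have hc : ((n - k : ℕ) : ℂ) = (n : ℂ) - k := by
        push_cast [h]; ring
      push_cast [hc]
      ring
    · rw [Nat.descFactorial_eq_zero_iff_lt.mpr h, Nat.sub_eq_zero_of_le h.le]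
      simp
lemma pe_desc_choose (n k : ℕ) : pe (-(n:ℂ)) k = (-1)^k * (k.factorial : ℂ) * (n.choose k : ℂ) := by
  rw [pe_neg_nat, Nat.descFactorial_eq_factorial_mul_choose]
  push_cast; ring

lemma pe_split_c (c : ℂ) (n k : ℕ) (h : k ≤ n) : pe c n = pe c k * pe (c + k) (n - k) := by
  rw [← pe_mul, Nat.add_sub_cancel' h]

lemma pe_split_d (d : ℂ) (n : ℕ) : ∀ k ≤ n,
    pe d n = (-1)^k * pe (1 - d - n) k * pe d (n - k) := by
  intro k
  induction k with
  | zero => simp [pe_zero]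
  | succ k ih =>
    intro h
    have hk : k ≤ n := by omega
    rw [ih hk, pe_succ_right (1 - d - n) k]
    obtain ⟨m, hm⟩ : ∃ m, n - k = m + 1 := ⟨n - k - 1, by omega⟩
    rw [hm, show n - (k+1) = m from by omega, pe_succ_right d m]
    have hmc : (m : ℂ) = (n : ℂ) - k - 1 := by
      have : (m+1+k : ℕ) = n := by omega
      have := congrArg (Nat.cast : ℕ → ℂ) this
      push_cast at this
      linear_combination this
    rw [hmc]
    ring

lemma star (a b c : ℂ) (n : ℕ) :
    ∑ k ∈ Finset.range (n+1), (n.choose k : ℂ) * pe a k * pe b k *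
      pe (c + k) (n - k) * pe (c - a - b) (n - k)
      = pe (c - a) n * pe (c - b) n := by
  induction n with
  | zero => simp [pe_zero]
  | succ n ih =>
    rw [Finset.sum_range_succ, Finset.sum_congr rfl (key a b c n), Finset.sum_add_distrib,
      ← Finset.mul_sum, ih, Finset.sum_range_sub (gfun n a b c)]
    have hg0 : gfun n a b c 0 = 0 := by simp [gfun]
    have hgn : gfun n a b c (n+1) = -(pe a (n+1) * pe b (n+1)) := by simp [gfun]
    have hlast : ((n+1).choose (n+1) : ℂ) * pe a (n+1) * pe b (n+1) *
        pe (c + ((n+1 : ℕ) : ℂ)) (n+1-(n+1)) * pe (c - a - b) (n+1-(n+1)) =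
        pe a (n+1) * pe b (n+1) := by
      simp [Nat.sub_self, pe_zero]
    rw [hg0, hgn, hlast, pe_succ_right (c-a) n, pe_succ_right (c-b) n]
    ring

lemma peval (x : ℂ) (k : ℕ) : (ascPochhammer ℂ k).eval x = pe x k := rfl

/-- Pfaff–Saalschütz identity:
`₃F₂(−n, a, b; c, 1+a+b−c−n; 1) = (c−a)ₙ(c−b)ₙ/((c)ₙ(c−a−b)ₙ)`. -/
theorem pfaff_saalschuetz (n : ℕ) (a b c : ℂ)
    (hc : ∀ k, k ≤ n → (ascPochhammer ℂ k).eval c ≠ 0)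
    (hd : ∀ k, k ≤ n → (ascPochhammer ℂ k).eval (1 + a + b - c - (n : ℂ)) ≠ 0)
    (hcab : (ascPochhammer ℂ n).eval (c - a - b) ≠ 0) :
    ∑ k ∈ Finset.range (n + 1),
        ((ascPochhammer ℂ k).eval (-(n : ℂ)) * (ascPochhammer ℂ k).eval a *
            (ascPochhammer ℂ k).eval b) /
          ((ascPochhammer ℂ k).eval c *
            (ascPochhammer ℂ k).eval (1 + a + b - c - (n : ℂ)) * (k.factorial : ℂ)) =
      ((ascPochhammer ℂ n).eval (c - a) * (ascPochhammer ℂ n).eval (c - b)) /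
        ((ascPochhammer ℂ n).eval c * (ascPochhammer ℂ n).eval (c - a - b)) := by
  simp only [peval] at *
  have hterm : ∀ k ∈ Finset.range (n+1),
      (pe (-(n:ℂ)) k * pe a k * pe b k) /
        (pe c k * pe (1 + a + b - c - (n:ℂ)) k * (k.factorial : ℂ))
      = ((n.choose k : ℂ) * pe a k * pe b k * pe (c + k) (n - k) * pe (c - a - b) (n - k)) /
        (pe c n * pe (c - a - b) n) := by
    intro k hk
    have hkn : k ≤ n := Finset.mem_range_succ_iff.mp hk
    have e1 : pe c n = pe c k * pe (c + k) (n - k) := pe_split_c c n k hkn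
    have e2 : pe (c - a - b) n
        = (-1)^k * pe (1 + a + b - c - (n:ℂ)) k * pe (c - a - b) (n - k) := by
      have h := pe_split_d (c - a - b) n k hkn
      rw [show (1:ℂ) - (c - a - b) - (n:ℂ) = 1 + a + b - c - (n:ℂ) from by ring] at h
      exact h
    have hB : pe c k * pe (1 + a + b - c - (n:ℂ)) k * (k.factorial : ℂ) ≠ 0 :=
      mul_ne_zero (mul_ne_zero (hc k hkn) (hd k hkn)) (Nat.cast_ne_zero.mpr k.factorial_ne_zero)
    have hD : pe c n * pe (c - a - b) n ≠ 0 := mul_ne_zero (hc n le_rfl) hcab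
    rw [div_eq_div_iff hB hD, pe_desc_choose, e1, e2]
    have hsq : ((-1:ℂ))^k * (-1)^k = 1 := by rw [← mul_pow]; norm_num
    linear_combination ((n.choose k : ℂ) * pe a k * pe b k * pe (c + k) (n - k) *
      pe (c - a - b) (n - k) * pe c k * pe (1 + a + b - c - (n:ℂ)) k * (k.factorial : ℂ)) * hsq
  rw [Finset.sum_congr rfl hterm, ← Finset.sum_div, star]
end

section
/- For every complex number α ≠ −1 and every natural n, ∑_{j=0}^{n} (−1)^j · C(α, j) · C(α−1−j, n−j) / (j+1) = (C(α, n+1) + (−1)^n) / (α + 1), where C(x, k) = x(x−1)⋯(x−k+1)/k! denotes the generalized binomial coefficient. -/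
/-!
Upper negation `C(α−1−j, n−j) = (−1)^(n−j) C(n−α, n−j)` and absorption
`C(α, j)/(j+1) = C(α+1, j+1)/(α+1)` turn the `j`-th summand into
`(−1)ⁿ/(α+1) · C(α+1, j+1) C(n−α, n−j)`. By Chu–Vandermonde these products sum to
`C(n+1, n+1) − C(n−α, n+1) = 1 + (−1)ⁿ C(α, n+1)`, the term with index `0` being the one
missing.
-/

/-- Generalized binomial coefficient `C(x, k) = x(x−1)⋯(x−k+1)/k!`. -/
noncomputable def genBinom (x : ℂ) (k : ℕ) : ℂ :=
  (∏ i ∈ Finset.range k, (x - (i : ℂ))) / (k.factorial : ℂ)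

open Finset

namespace Ring

variable {R : Type*} [CommRing R] [BinomialRing R]

theorem choose_natCast_sub_one_sub (r : R) (k : ℕ) :
    choose ((k : R) - 1 - r) k = (-1) ^ k * choose r k := by
  rw [show (k : R) - 1 - r = -(r - k + 1) by ring, choose_neg,
    show r - k + 1 + k - 1 = r by ring, Int.negOnePow_def, Units.smul_def]
  simp

theorem succ_mul_choose_succ (r : R) (k : ℕ) :
    ((k : R) + 1) * choose (r + 1) (k + 1) = (r + 1) * choose r k := by
  have h := choose_smul_choose (r + 1) (Nat.le_add_left 1 k)
  rwa [Nat.choose_one_right, nsmul_eq_mul, choose_one_right, Nat.cast_one, add_sub_cancel_right,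
    Nat.add_sub_cancel, Nat.cast_succ] at h

theorem sum_range_choose_succ_mul_choose (r s : R) (n : ℕ) :
    ∑ j ∈ range (n + 1), choose r (j + 1) * choose s (n - j) =
      choose (r + s) (n + 1) - choose s (n + 1) := by
  rw [add_choose_eq _ (Commute.all r s), Nat.sum_antidiagonal_eq_sum_range_succ_mk,
    sum_range_succ' _ (n + 1)]
  simp

end Ring

theorem genBinom_eq_choose (x : ℂ) (k : ℕ) : genBinom x k = Ring.choose x k := by
  rw [Ring.choose_eq_smul, genBinom, ← descPochhammer_eval_eq_prod_range, smul_eq_mul,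
    inv_mul_eq_div, ← descPochhammer_map (algebraMap ℤ ℂ), Polynomial.eval_map_algebraMap,
    Polynomial.aeval_eq_smeval]

theorem binomial_sum_summand_eq {α : ℂ} (hα : α + 1 ≠ 0) {n j : ℕ} (hj : j ≤ n) :
    (-1 : ℂ) ^ j * Ring.choose α j * Ring.choose (α - 1 - j) (n - j) / ((j : ℂ) + 1) =
      (-1) ^ n / (α + 1) *
        (Ring.choose (α + 1) (j + 1) * Ring.choose ((n : ℂ) - α) (n - j)) := by
  have hneg : Ring.choose (α - 1 - j) (n - j) =
      (-1) ^ (n - j) * Ring.choose ((n : ℂ) - α) (n - j) := by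
    rw [← Ring.choose_natCast_sub_one_sub, Nat.cast_sub hj]
    ring_nf
  have habs := Ring.succ_mul_choose_succ α j
  have hsign : (-1 : ℂ) ^ j * (-1) ^ (n - j) = (-1) ^ n := by
    rw [← pow_add, Nat.add_sub_cancel' hj]
  rw [hneg]
  field_simp
  linear_combination Ring.choose α j * Ring.choose ((n : ℂ) - α) (n - j) * (α + 1) * hsign
    - Ring.choose ((n : ℂ) - α) (n - j) * (-1) ^ n * habs

/-- For `α ≠ −1`,
`∑_{j=0}^{n} (−1)ʲ C(α, j) C(α−1−j, n−j)/(j+1) = (C(α, n+1) + (−1)ⁿ)/(α+1)`. -/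
theorem binomial_sum_identity (α : ℂ) (hα : α ≠ -1) (n : ℕ) :
    ∑ j ∈ Finset.range (n + 1),
        (-1 : ℂ) ^ j * genBinom α j * genBinom (α - 1 - (j : ℂ)) (n - j) / ((j : ℂ) + 1) =
      (genBinom α (n + 1) + (-1 : ℂ) ^ n) / (α + 1) := by
  have hα' : α + 1 ≠ 0 := by rwa [Ne, ← eq_neg_iff_add_eq_zero]
  have hvandermonde : ∑ j ∈ range (n + 1),
      Ring.choose (α + 1) (j + 1) * Ring.choose ((n : ℂ) - α) (n - j) =
        1 - (-1) ^ (n + 1) * Ring.choose α (n + 1) := by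
    rw [Ring.sum_range_choose_succ_mul_choose,
      show α + 1 + ((n : ℂ) - α) = (n + 1 : ℕ) by push_cast; ring, Ring.choose_natCast,
      Nat.choose_self, Nat.cast_one, show (n : ℂ) - α = (n + 1 : ℕ) - 1 - α by push_cast; ring,
      Ring.choose_natCast_sub_one_sub]
  have hsign : (-1 : ℂ) ^ n * (-1) ^ (n + 1) = -1 := by
    rw [← pow_add]
    exact Odd.neg_one_pow ⟨n, by ring⟩
  simp only [genBinom_eq_choose]
  rw [sum_congr rfl fun j hj ↦ binomial_sum_summand_eq hα' (mem_range_succ_iff.1 hj), ← mul_sum,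
    hvandermonde]
  field_simp
  linear_combination -Ring.choose α (n + 1) * hsign
end
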